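/- Fix real parameters μ₁, μ₂, μ₃, μ₄ and define smooth vector fields on ℝ⁵ (coordinates x₀,x₁,x₂,x₃,x₄) by η̃₀ = (1,0,0,0,0), η̃₁ = (0,1,0,0,0), η̃₂(x) = (−μ₁x₁, 0, 1, 0, 0), η̃₃(x) = ((μ₁/2)(x₁² − x₂²) − μ₃x₁ − μ₄x₂, x₂, −x₁, 1, 0), η̃₄(x) = (−μ₂x₃, 0, 0, 0, 1). Then, with respect to the Lie bracket of vector fields, these satisfy the (opposite) commutation relations of the central extension of e(2) ⊕ ℝ: [η̃₁,η̃₂] = −μ₁η̃₀, [η̃₁,η̃₃] = −η̃₂ − μ₃η̃₀, [η̃₂,η̃₃] = η̃₁ − μ₄η̃₀, [η̃₃,η̃₄] = −μ₂η̃₀, [η̃₁,η̃₄] = [η̃₂,η̃₄] = 0, and [η̃₀, η̃ₐ] = 0 for all a. -/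

import Mathlib

noncomputable section

/-- The Lie bracket of vector fields on `ℝ⁵`:
`[X,Y](p) = (DY)(p)·X(p) − (DX)(p)·Y(p)`. -/
def lieVF (X Y : (Fin 5 → ℝ) → (Fin 5 → ℝ)) : (Fin 5 → ℝ) → (Fin 5 → ℝ) :=
  fun p => fderiv ℝ Y p (X p) - fderiv ℝ X p (Y p)

/-- The right-invariant vector fields `η̃₀, η̃₁, η̃₂, η̃₃, η̃₄` of the central extension
of `E(2) × ℝ` on `ℝ⁵` (coordinates `x₀,…,x₄`). -/
def ηt (μ₁ μ₂ μ₃ μ₄ : ℝ) : Fin 5 → ((Fin 5 → ℝ) → (Fin 5 → ℝ)) :=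
  ![fun _ => ![1, 0, 0, 0, 0],
    fun _ => ![0, 1, 0, 0, 0],
    fun x => ![-(μ₁ * x 1), 0, 1, 0, 0],
    fun x => ![μ₁ / 2 * ((x 1) ^ 2 - (x 2) ^ 2) - μ₃ * x 1 - μ₄ * x 2, x 2, -x 1, 1, 0],
    fun x => ![-(μ₂ * x 3), 0, 0, 0, 1]]

/-!
Every field is polynomial, so its Jacobian `ηtDeriv` is explicit and each relation becomes a
coordinatewise polynomial identity. The quadratic coefficient `(μ₁/2)(x₁² − x₂²)` of `η̃₃` is what
makes this work: its derivative reproduces the `μ₁`-term of `η̃₂` in `[η̃₁, η̃₃]` and cancels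
`Dη̃₂ · η̃₃` in `[η̃₂, η̃₃]`.
-/

open ContinuousLinearMap

theorem lieVF_eq_of_hasFDerivAt {X Y : (Fin 5 → ℝ) → (Fin 5 → ℝ)}
    {X' Y' : (Fin 5 → ℝ) → (Fin 5 → ℝ) →L[ℝ] (Fin 5 → ℝ)}
    (hX : ∀ p, HasFDerivAt X (X' p) p) (hY : ∀ p, HasFDerivAt Y (Y' p) p) :
    lieVF X Y = fun p => Y' p (X p) - X' p (Y p) := by
  funext p
  rw [lieVF, (hX p).fderiv, (hY p).fderiv]

def ηtDeriv (μ₁ μ₂ μ₃ μ₄ : ℝ) (p : Fin 5 → ℝ) : Fin 5 → (Fin 5 → ℝ) →L[ℝ] (Fin 5 → ℝ) :=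
  ![0, 0,
    pi ![-(μ₁ • proj 1), 0, 0, 0, 0],
    pi ![(μ₁ * p 1 - μ₃) • proj 1 - (μ₁ * p 2 + μ₄) • proj 2, proj 2, -proj 1, 0, 0],
    pi ![-(μ₂ • proj 3), 0, 0, 0, 0]]

theorem hasFDerivAt_ηt (μ₁ μ₂ μ₃ μ₄ : ℝ) (a : Fin 5) (p : Fin 5 → ℝ) :
    HasFDerivAt (ηt μ₁ μ₂ μ₃ μ₄ a) (ηtDeriv μ₁ μ₂ μ₃ μ₄ p a) p := by
  have hx (i : Fin 5) : HasFDerivAt (fun x : Fin 5 → ℝ => x i) (proj i : (Fin 5 → ℝ) →L[ℝ] ℝ) p :=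
    hasFDerivAt_apply i p
  have hquad : HasFDerivAt (fun x : Fin 5 → ℝ => μ₁ / 2 * (x 1 ^ 2 - x 2 ^ 2) - μ₃ * x 1 - μ₄ * x 2)
      ((μ₁ * p 1 - μ₃) • proj (R := ℝ) 1 - (μ₁ * p 2 + μ₄) • proj 2) p := by
    refine (((((hx 1).pow 2).sub ((hx 2).pow 2)).const_mul (μ₁ / 2)).sub
      ((hx 1).const_mul μ₃)).sub ((hx 2).const_mul μ₄) |>.congr_fderiv ?_
    ext v
    simp only [Nat.add_one_sub_one, pow_one, nsmul_eq_mul, Nat.cast_ofNat, sub_apply, smul_apply,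
      proj_apply, smul_eq_mul]
    ring
  fin_cases a
  · exact hasFDerivAt_const _ p
  · exact hasFDerivAt_const _ p
  all_goals
    refine hasFDerivAt_pi.2 fun i => ?_
    fin_cases i <;> simp only [ηt, Fin.isValue, Fin.reduceFinMk, Fin.zero_eta, Fin.mk_one,
      Matrix.cons_val', Matrix.cons_val_fin_one, Matrix.cons_val_zero, Matrix.cons_val_one,
      Matrix.cons_val]
  all_goals first
    | exact hasFDerivAt_const _ p
    | exact hx _
    | exact (hx _).neg
    | exact ((hx _).const_mul _).neg
    | exact hquad

theorem lieVF_ηt (μ₁ μ₂ μ₃ μ₄ : ℝ) (a b : Fin 5) :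
    lieVF (ηt μ₁ μ₂ μ₃ μ₄ a) (ηt μ₁ μ₂ μ₃ μ₄ b) =
      fun p => ηtDeriv μ₁ μ₂ μ₃ μ₄ p b (ηt μ₁ μ₂ μ₃ μ₄ a p)
        - ηtDeriv μ₁ μ₂ μ₃ μ₄ p a (ηt μ₁ μ₂ μ₃ μ₄ b p) :=
  lieVF_eq_of_hasFDerivAt (hasFDerivAt_ηt μ₁ μ₂ μ₃ μ₄ a) (hasFDerivAt_ηt μ₁ μ₂ μ₃ μ₄ b)

theorem lieVF_ηt_zero_left (μ₁ μ₂ μ₃ μ₄ : ℝ) (a : Fin 5) :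
    lieVF (ηt μ₁ μ₂ μ₃ μ₄ 0) (ηt μ₁ μ₂ μ₃ μ₄ a) = 0 := by
  rw [lieVF_ηt]
  funext p i
  fin_cases a <;> fin_cases i <;> simp [ηt, ηtDeriv]

/-- the fields `η̃ₐ` satisfy the (opposite) commutation relations of
the one-dimensional central extension of `e(2) ⊕ ℝ` by the 2-cocycle with
parameters `μ₁, μ₂, μ₃, μ₄`. -/
theorem extended_eta_fields_commutation_relations (μ₁ μ₂ μ₃ μ₄ : ℝ) :
    lieVF (ηt μ₁ μ₂ μ₃ μ₄ 1) (ηt μ₁ μ₂ μ₃ μ₄ 2) = -μ₁ • ηt μ₁ μ₂ μ₃ μ₄ 0 ∧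
    lieVF (ηt μ₁ μ₂ μ₃ μ₄ 1) (ηt μ₁ μ₂ μ₃ μ₄ 3)
      = -ηt μ₁ μ₂ μ₃ μ₄ 2 - μ₃ • ηt μ₁ μ₂ μ₃ μ₄ 0 ∧
    lieVF (ηt μ₁ μ₂ μ₃ μ₄ 2) (ηt μ₁ μ₂ μ₃ μ₄ 3)
      = ηt μ₁ μ₂ μ₃ μ₄ 1 - μ₄ • ηt μ₁ μ₂ μ₃ μ₄ 0 ∧
    lieVF (ηt μ₁ μ₂ μ₃ μ₄ 3) (ηt μ₁ μ₂ μ₃ μ₄ 4) = -μ₂ • ηt μ₁ μ₂ μ₃ μ₄ 0 ∧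
    lieVF (ηt μ₁ μ₂ μ₃ μ₄ 1) (ηt μ₁ μ₂ μ₃ μ₄ 4) = 0 ∧
    lieVF (ηt μ₁ μ₂ μ₃ μ₄ 2) (ηt μ₁ μ₂ μ₃ μ₄ 4) = 0 ∧
    (∀ a : Fin 5, lieVF (ηt μ₁ μ₂ μ₃ μ₄ 0) (ηt μ₁ μ₂ μ₃ μ₄ a) = 0) := by
  refine ⟨?_, ?_, ?_, ?_, ?_, ?_, lieVF_ηt_zero_left μ₁ μ₂ μ₃ μ₄⟩
  all_goals
    rw [lieVF_ηt]
    funext p i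
    fin_cases i <;> simp [ηt, ηtDeriv]
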